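/- Let x₀,…,x_N satisfy a forward Markov model x_k = M_{k,k-1} x_{k-1} + e_k for k ∈ [1,N] with x₀ = e₀, where e₀,…,e_N are zero-mean uncorrelated Gaussian vectors with positive definite covariances M₀,…,M_N. Then the inverse of the covariance matrix C of the stacked vector x = (x₀',…,x_N')' equals 𝓜' M⁻¹ 𝓜, where 𝓜 is block lower bidiagonal with identity diagonal blocks and subdiagonal blocks -M_{k,k-1}, and M = diag(M₀,…,M_N). In particular C⁻¹ is block tridiagonal. -/
import Mathlib


open Matrix MeasureTheory

/-- Square `d × d` real matrices (one block). -/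
abbrev SqMat (d : ℕ) := Matrix (Fin d) (Fin d) ℝ

/-- Big `(N+1)d × (N+1)d` real matrices, viewed as `(N+1) × (N+1)` arrays of
`d × d` blocks. -/
abbrev BigMat (N d : ℕ) := Matrix (Fin (N+1) × Fin d) (Fin (N+1) × Fin d) ℝ

/-- The `(i,j)` block of a big matrix. -/
def blk {N d : ℕ} (A : BigMat N d) (i j : Fin (N+1)) : SqMat d :=
  fun a b => A (i, a) (j, b)

/-- Block diagonal big matrix with diagonal blocks `D 0, …, D N`. -/
def bdiag (N d : ℕ) (D : ℕ → SqMat d) : BigMat N d :=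
  fun p q => if (p.1 : ℕ) = (q.1 : ℕ) then D (p.1 : ℕ) p.2 q.2 else 0

/-- The block lower bidiagonal matrix `𝓜` of a forward Markov model: identity blocks
on the diagonal and block `-(T k) = -M_{k,k-1}` in position `(k, k-1)` for `k ∈ [1,N]`. -/
def lowerBidiag (N d : ℕ) (T : ℕ → SqMat d) : BigMat N d :=
  fun p q =>
    if (p.1 : ℕ) = (q.1 : ℕ) then (if p.2 = q.2 then 1 else 0)
    else if (q.1 : ℕ) + 1 = (p.1 : ℕ) then -(T (p.1 : ℕ) p.2 q.2) else 0

/-- The block upper bidiagonal matrix `𝓜ᴮ` of a backward Markov model: identity blocks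
on the diagonal and block `-(T k) = -Mᴮ_{k,k+1}` in position `(k, k+1)` for `k ∈ [0,N-1]`. -/
def upperBidiag (N d : ℕ) (T : ℕ → SqMat d) : BigMat N d :=
  fun p q =>
    if (p.1 : ℕ) = (q.1 : ℕ) then (if p.2 = q.2 then 1 else 0)
    else if (p.1 : ℕ) + 1 = (q.1 : ℕ) then -(T (p.1 : ℕ) p.2 q.2) else 0

/-- Let `x₀,…,x_N` satisfy a forward Markov model
`x_k = M_{k,k-1} x_{k-1} + e_k` (`k ∈ [1,N]`), `x₀ = e₀` (encoded as `𝓜 X = E` for the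
stacked vectors), where the noises `e₀,…,e_N` are zero-mean uncorrelated with positive
definite covariances `M k` (so `Cov(E) = diag(M₀,…,M_N)`).  Then the inverse of the
covariance `C` of the stacked vector equals `𝓜ᵀ M⁻¹ 𝓜`, and in particular `C⁻¹` is
block tridiagonal. -/
theorem markov_model_inverse_covariance {N d : ℕ} {Ω : Type*} [MeasurableSpace Ω]
    (μ : Measure Ω) [IsProbabilityMeasure μ]
    (Tr M : ℕ → SqMat d)
    (hM : ∀ k ≤ N, (M k).PosDef)
    (X E : Ω → (Fin (N+1) × Fin d → ℝ))
    (hmodel : ∀ ω, (lowerBidiag N d Tr).mulVec (X ω) = E ω)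
    (hE : ∀ p q, (∫ ω, E ω p * E ω q ∂μ) = bdiag N d M p q)
    (hInt : ∀ p q : Fin (N+1) × Fin d, Integrable (fun ω => X ω p * X ω q) μ)
    (C : BigMat N d)
    (hC : ∀ p q, C p q = ∫ ω, X ω p * X ω q ∂μ)
    (hCpd : C.PosDef) :
    C⁻¹ = (lowerBidiag N d Tr)ᵀ * bdiag N d (fun k => (M k)⁻¹) * lowerBidiag N d Tr ∧
      ∀ i j : Fin (N+1), ((i : ℕ) + 1 < (j : ℕ) ∨ (j : ℕ) + 1 < (i : ℕ)) →
        blk C⁻¹ i j = 0 := by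
  classical
  set L := lowerBidiag N d Tr with hLdef
  set D := bdiag N d M with hDdef
  set Dinv := bdiag N d (fun k => (M k)⁻¹) with hDinvdef
  -- D * Dinv = 1
  have hMinv : ∀ i : Fin (N+1), M (i:ℕ) * (M (i:ℕ))⁻¹ = 1 := fun i =>
    Matrix.mul_nonsing_inv _ (isUnit_iff_ne_zero.mpr (hM i (Fin.is_le i)).det_pos.ne')
  have hDDinv : D * Dinv = 1 := by
    funext p q
    rcases p with ⟨i, a⟩; rcases q with ⟨j, b⟩
    simp only [hDdef, hDinvdef, Matrix.mul_apply, bdiag, Fintype.sum_prod_type,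
      Matrix.one_apply, Fin.val_eq_val, ite_mul, mul_ite, zero_mul, mul_zero, Prod.mk.injEq]
    by_cases hij : i = j
    · subst hij
      rw [Finset.sum_eq_single i ?_ ?_]
      · simp only [if_pos rfl, eq_self_iff_true, if_true, true_and]
        rw [← Matrix.mul_apply, hMinv i, Matrix.one_apply]
      · intro x _ hx
        refine Finset.sum_eq_zero fun cc _ => ?_
        rw [if_neg hx]
      · intro h; exact absurd (Finset.mem_univ i) h
    · rw [if_neg (by rintro ⟨h, -⟩; exact hij h)]
      refine Finset.sum_eq_zero fun x _ => Finset.sum_eq_zero fun cc _ => ?_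
      split_ifs with h1 h2
      · exact absurd (h2.trans h1) hij
      · rfl
      · rfl
  -- key covariance identity
  have hrep : ∀ ω (p q : Fin (N+1) × Fin d), E ω p * E ω q
      = ∑ x : Fin (N+1) × Fin d, ∑ y : Fin (N+1) × Fin d,
          L p x * L q y * (X ω x * X ω y) := by
    intro ω p q
    rw [← hmodel ω]
    simp only [Matrix.mulVec, dotProduct]
    rw [Finset.sum_mul_sum]
    exact Finset.sum_congr rfl fun x _ => Finset.sum_congr rfl fun y _ => by ring
  have key : L * C * Lᵀ = D := by
    funext p q
    have h1 : (∫ ω, E ω p * E ω q ∂μ)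
        = ∑ x : Fin (N+1) × Fin d, ∑ y : Fin (N+1) × Fin d, L p x * L q y * C x y := by
      calc (∫ ω, E ω p * E ω q ∂μ)
          = ∫ ω, ∑ x : Fin (N+1) × Fin d, ∑ y : Fin (N+1) × Fin d,
              L p x * L q y * (X ω x * X ω y) ∂μ := by
            exact integral_congr_ae (Filter.Eventually.of_forall fun ω => hrep ω p q)
        _ = ∑ x : Fin (N+1) × Fin d, ∫ ω, ∑ y : Fin (N+1) × Fin d,
              L p x * L q y * (X ω x * X ω y) ∂μ := by
            refine integral_finset_sum _ fun x _ => ?_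
            exact integrable_finset_sum _ fun y _ => ((hInt x y).const_mul _)
        _ = ∑ x : Fin (N+1) × Fin d, ∑ y : Fin (N+1) × Fin d,
              ∫ ω, L p x * L q y * (X ω x * X ω y) ∂μ := by
            refine Finset.sum_congr rfl fun x _ => ?_
            exact integral_finset_sum _ fun y _ => ((hInt x y).const_mul _)
        _ = ∑ x : Fin (N+1) × Fin d, ∑ y : Fin (N+1) × Fin d, L p x * L q y * C x y := by
            refine Finset.sum_congr rfl fun x _ => Finset.sum_congr rfl fun y _ => ?_
            rw [integral_const_mul, hC x y]
    have h2 : (L * C * Lᵀ) p q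
        = ∑ x : Fin (N+1) × Fin d, ∑ y : Fin (N+1) × Fin d, L p x * L q y * C x y := by
      simp only [Matrix.mul_apply, Matrix.transpose_apply, Finset.sum_mul]
      rw [Finset.sum_comm]
      exact Finset.sum_congr rfl fun x _ => Finset.sum_congr rfl fun y _ => by ring
    rw [h2, ← h1, hE p q]
  -- invertibility of L
  have hDunit : IsUnit D.det := by
    have : IsUnit (D.det * Dinv.det) := by
      rw [← Matrix.det_mul, hDDinv, Matrix.det_one]; exact isUnit_one
    exact isUnit_of_mul_isUnit_left this
  have hLunit : IsUnit L.det := by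
    have hd : L.det * (C.det * Lᵀ.det) = D.det := by
      rw [← mul_assoc, ← Matrix.det_mul, ← Matrix.det_mul, key]
    exact isUnit_of_mul_isUnit_left (hd ▸ hDunit)
  have h1 : C * Lᵀ = L⁻¹ * D := by
    calc C * Lᵀ = L⁻¹ * (L * C * Lᵀ) := by
          rw [← Matrix.mul_assoc, ← Matrix.mul_assoc, Matrix.nonsing_inv_mul _ hLunit,
            Matrix.one_mul]
      _ = L⁻¹ * D := by rw [key]
  have hright : C * (Lᵀ * Dinv * L) = 1 := by
    calc C * (Lᵀ * Dinv * L) = C * Lᵀ * Dinv * L := by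
          rw [Matrix.mul_assoc, Matrix.mul_assoc, Matrix.mul_assoc]
      _ = L⁻¹ * D * Dinv * L := by rw [h1]
      _ = L⁻¹ * L := by rw [Matrix.mul_assoc L⁻¹ D Dinv, hDDinv, Matrix.mul_one]
      _ = 1 := Matrix.nonsing_inv_mul _ hLunit
  have hCinv : C⁻¹ = Lᵀ * Dinv * L := Matrix.inv_eq_right_inv hright
  refine ⟨hCinv, ?_⟩
  intro i j hij
  funext a b
  show C⁻¹ (i, a) (j, b) = 0
  rw [hCinv]
  simp only [Matrix.mul_apply, Matrix.transpose_apply, Finset.sum_mul]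
  refine Finset.sum_eq_zero fun x _ => Finset.sum_eq_zero fun y _ => ?_
  rcases x with ⟨k, e⟩; rcases y with ⟨l, c⟩
  rcases hij with h | h <;>
  · simp only [hLdef, hDinvdef, lowerBidiag, bdiag]
    split_ifs <;> first | (exfalso; omega) | ring1
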